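/- arXiv:0903.5140 — 3 statements merged into one kernel-verified Lean document; each statement's English description precedes it below -/
import Mathlib

section
/- Let (Γ, R) be an admissible monomial bound quiver. A quiver admits string functions S, T : Γ₁ → {±1} satisfying conditions (1)–(4) if and only if it is almost gentle, i.e.: (a) each vertex has at most two outgoing and at most two incoming arrows; (b) for each arrow α there is at most one arrow α' with s α' = t α and α'α ∉ R, and at most one arrow α' with t α' = s α and αα' ∉ R; (c) for each arrow α there is at most one arrow α' with s α' = t α and α'α ∈ R, and at most one arrow α' with t α' = s α and αα' ∈ R. -/
noncomputable section
open Classical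

/-- A quiver: a set of vertices, a set of arrows, and source/target maps. -/
structure Quiv : Type 1 where
  V : Type
  A : Type
  src : A → V
  tgt : A → V

namespace Quiv

variable (Q : Quiv)

/-- Letters of the double quiver: direct arrows (`inl`) and formal inverses (`inr`). -/
abbrev Letter := Q.A ⊕ Q.A

/-- Source of a letter of the double quiver. -/
def srcL : Q.Letter → Q.V := Sum.elim Q.src Q.tgt

/-- Target of a letter of the double quiver. -/
def tgtL : Q.Letter → Q.V := Sum.elim Q.tgt Q.src

/-- Inversion of a single letter. -/
def swapL : Q.Letter → Q.Letter := Sum.elim Sum.inr Sum.inl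

/-- Inversion of a walk in the double quiver: `(ω'ω'')⁻¹ = ω''⁻¹ω'⁻¹`. -/
def invStr (z : List Q.Letter) : List Q.Letter := (z.map Q.swapL).reverse

/-- The composability condition for a list of arrows `α₁ ⋯ α_l` (`s αᵢ = t α_{i+1}`). -/
def ChainP (l : List Q.A) : Prop := l.Chain' fun a b => Q.src a = Q.tgt b

/-- `l` is a path from `x` to `y` (trivial paths are represented by the empty list). -/
def PathBtw (x y : Q.V) (l : List Q.A) : Prop :=
  Q.ChainP l ∧ ((l = [] ∧ x = y) ∨
    (l.getLast?.map Q.src = some x ∧ l.head?.map Q.tgt = some y))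

/-- `l` is a path from `x` to `y` in the monomial bound quiver `(Q, R)`,
i.e. it avoids every relation of `R` as a consecutive subpath. -/
def PathIn (R : Set (List Q.A)) (x y : Q.V) (l : List Q.A) : Prop :=
  Q.PathBtw x y l ∧ ∀ ρ ∈ R, ¬ ρ <:+: l

/-- `l` is a maximal path in the monomial bound quiver `(Q, R)`. -/
def MaximalPathIn (R : Set (List Q.A)) (x y : Q.V) (l : List Q.A) : Prop :=
  Q.PathIn R x y l ∧
    ∀ (y' x'' : Q.V) (p s : List Q.A),
      Q.PathIn R y y' p → Q.PathIn R x'' x s → Q.PathIn R x'' y' (p ++ l ++ s) →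
      p.length + s.length = 0

/-- `S`, `T` are string functions for the bound quiver `(Q, R)`:
they take values in `{±1}` and satisfy the four sign conditions. -/
def StringFuns (R : Set (List Q.A)) (S T : Q.A → ℤ) : Prop :=
  (∀ a, S a = 1 ∨ S a = -1) ∧ (∀ a, T a = 1 ∨ T a = -1) ∧
  (∀ a b, Q.src a = Q.src b → a ≠ b → S a = - S b) ∧
  (∀ a b, Q.tgt a = Q.tgt b → a ≠ b → T a = - T b) ∧
  (∀ a b, Q.src a = Q.tgt b → [a, b] ∉ R → S a = - T b) ∧
  (∀ a b, Q.src a = Q.tgt b → [a, b] ∈ R → S a = T b)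

/-- Extension of `S` to letters of the double quiver (`S α⁻¹ := T α`). -/
def SL (S T : Q.A → ℤ) : Q.Letter → ℤ := Sum.elim S T

/-- Extension of `T` to letters of the double quiver (`T α⁻¹ := S α`). -/
def TL (S T : Q.A → ℤ) : Q.Letter → ℤ := Sum.elim T S

/-- Forbidden consecutive pairs of letters for strings:
relations of `R`, their inverses, and `αα⁻¹`, `α⁻¹α`. -/
def BadPair (R : Set (List Q.A)) : Q.Letter → Q.Letter → Prop
  | .inl a, .inl b => [a, b] ∈ R
  | .inr a, .inr b => [b, a] ∈ R
  | .inl a, .inr b => a = b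
  | .inr a, .inl b => a = b

/-- `z` is (the list of letters of) a string in the bound quiver `(Q, R)`. -/
def IsStringList (R : Set (List Q.A)) (z : List Q.Letter) : Prop :=
  z.Chain' fun a b => Q.srcL a = Q.tgtL b ∧ ¬ Q.BadPair R a b

/-- Forbidden consecutive pairs of letters for homotopy strings: only `αα⁻¹`, `α⁻¹α`. -/
def HBadPair : Q.Letter → Q.Letter → Prop
  | .inl a, .inr b => a = b
  | .inr a, .inl b => a = b
  | _, _ => False

/-- `z` is (the list of letters of) a homotopy string. -/
def IsHStr (z : List Q.Letter) : Prop :=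
  z.Chain' fun a b => Q.srcL a = Q.tgtL b ∧ ¬ Q.HBadPair a b

/-- The degree contribution of a directed string: `+1` for a path, `-1` for an inverse path. -/
def dsgn (p : List Q.Letter) : ℤ :=
  match p.head? with
  | some (.inl _) => 1
  | some (.inr _) => -1
  | none => 0

/-- The degree of a homotopy string given via its decomposition into directed strings. -/
def degD (σs : List (List Q.Letter)) : ℤ := (σs.map Q.dsgn).sum

/-- A directed string: all letters are direct arrows, or all letters are inverse arrows. -/
def DirectedStr (p : List Q.Letter) : Prop :=
  (∀ a ∈ p, a.isLeft = true) ∨ (∀ a ∈ p, a.isRight = true)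

/-- The composition of homotopy strings `p` (left factor) and `q` (right factor) is defined. -/
def HComposable (S T : Q.A → ℤ) (p q : List Q.Letter) : Prop :=
  p.getLast?.map Q.srcL = q.head?.map Q.tgtL ∧
  ∃ a ∈ p.getLast?, ∃ b ∈ q.head?,
    (Q.SL S T a = Q.TL S T b ∧ a.isLeft = b.isLeft) ∨
    (Q.SL S T a = - Q.TL S T b ∧ a.isLeft = !b.isLeft)

/-- `σs` is the decomposition of the homotopy string `ω` into directed strings
of positive length with defined consecutive compositions. -/
def IsDecomp (S T : Q.A → ℤ) (ω : List Q.Letter) (σs : List (List Q.Letter)) : Prop :=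
  σs.flatten = ω ∧ (∀ p ∈ σs, p ≠ [] ∧ Q.DirectedStr p) ∧ σs.Chain' (Q.HComposable S T)

/-- `(Q, R)` together with `S`, `T` is a gentle bound quiver. -/
def IsGentle (R : Set (List Q.A)) (S T : Q.A → ℤ) : Prop :=
  Finite Q.V ∧ Finite Q.A ∧ (∀ ρ ∈ R, Q.ChainP ρ ∧ ρ.length = 2) ∧ Q.StringFuns R S T

/-- Admissibility of a monomial bound quiver: some power of the arrow ideal
lies in the relation ideal. -/
def Admissible (R : Set (List Q.A)) : Prop :=
  ∃ n : ℕ, ∀ (x y : Q.V) (l : List Q.A), Q.PathBtw x y l → n ≤ l.length → ∃ ρ ∈ R, ρ <:+: l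

end Quiv

/-!
String functions take values in `{±1}`, so conditions (1)–(4) can neither make three arrows
pairwise opposite nor let two distinct arrows play the same role; this gives (a)–(c).
Conversely, mark at each vertex one incoming arrow and let `T` be `+1` exactly on the marked
arrows. Put `S α = +1` exactly when `αβ ∈ R` for the marked arrow `β` into `s α`, or, if no arrow
ends at `s α`, exactly when `α` is a marked outgoing arrow. Almost gentleness is precisely what
makes (1)–(4) hold for this choice.
-/

theorem eq_or_eq_or_eq_of_eq_neg {α : Type*} {f : α → ℤ} (hf : ∀ a, f a = 1 ∨ f a = -1)
    {a b c : α} (hab : a ≠ b → f a = -f b) (hac : a ≠ c → f a = -f c)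
    (hbc : b ≠ c → f b = -f c) : a = b ∨ a = c ∨ b = c := by
  by_contra! h
  have := hab h.1
  have := hac h.2.1
  have := hbc h.2.2
  rcases hf c with _ | _ <;> omega

theorem eq_of_eq_neg {α : Type*} {f : α → ℤ} (hf : ∀ a, f a = 1 ∨ f a = -1) {a b : α}
    (hab : a ≠ b → f a = -f b) (h : f a = f b) : a = b := by
  by_contra hne
  have := hab hne
  rcases hf a with _ | _ <;> omega

def signOf (p : Prop) : ℤ := if p then 1 else -1

theorem signOf_eq_one_or (p : Prop) : signOf p = 1 ∨ signOf p = -1 := by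
  unfold signOf
  split_ifs <;> simp

theorem signOf_eq_neg_of_iff_not {p q : Prop} (h : p ↔ ¬q) : signOf p = -signOf q := by
  unfold signOf
  by_cases q <;> simp_all

namespace Quiv

structure AlmostGentle (Q : Quiv) (R : Set (List Q.A)) : Prop where
  src_three : ∀ (x : Q.V) (a b c : Q.A),
    Q.src a = x → Q.src b = x → Q.src c = x → a = b ∨ a = c ∨ b = c
  tgt_three : ∀ (x : Q.V) (a b c : Q.A),
    Q.tgt a = x → Q.tgt b = x → Q.tgt c = x → a = b ∨ a = c ∨ b = c
  succ_unique_of_not_mem : ∀ a a' a'' : Q.A, Q.src a' = Q.tgt a → [a', a] ∉ R →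
    Q.src a'' = Q.tgt a → [a'', a] ∉ R → a' = a''
  pred_unique_of_not_mem : ∀ a a' a'' : Q.A, Q.tgt a' = Q.src a → [a, a'] ∉ R →
    Q.tgt a'' = Q.src a → [a, a''] ∉ R → a' = a''
  succ_unique_of_mem : ∀ a a' a'' : Q.A, Q.src a' = Q.tgt a → [a', a] ∈ R →
    Q.src a'' = Q.tgt a → [a'', a] ∈ R → a' = a''
  pred_unique_of_mem : ∀ a a' a'' : Q.A, Q.tgt a' = Q.src a → [a, a'] ∈ R →
    Q.tgt a'' = Q.src a → [a, a''] ∈ R → a' = a''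

variable {Q : Quiv} {R : Set (List Q.A)}

theorem StringFuns.almostGentle {S T : Q.A → ℤ} (h : Q.StringFuns R S T) :
    Q.AlmostGentle R := by
  obtain ⟨hS, hT, hsrc, htgt, hnot, hmem⟩ := h
  constructor
  · intro x a b c ha hb hc
    exact eq_or_eq_or_eq_of_eq_neg hS (hsrc a b (ha.trans hb.symm))
      (hsrc a c (ha.trans hc.symm)) (hsrc b c (hb.trans hc.symm))
  · intro x a b c ha hb hc
    exact eq_or_eq_or_eq_of_eq_neg hT (htgt a b (ha.trans hb.symm))
      (htgt a c (ha.trans hc.symm)) (htgt b c (hb.trans hc.symm))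
  · intro a a' a'' h' hr' h'' hr''
    exact eq_of_eq_neg hS (hsrc a' a'' (h'.trans h''.symm))
      ((hnot a' a h' hr').trans (hnot a'' a h'' hr'').symm)
  · intro a a' a'' h' hr' h'' hr''
    have := hnot a a' h'.symm hr'
    have := hnot a a'' h''.symm hr''
    exact eq_of_eq_neg hT (htgt a' a'' (h'.trans h''.symm)) (by omega)
  · intro a a' a'' h' hr' h'' hr''
    exact eq_of_eq_neg hS (hsrc a' a'' (h'.trans h''.symm))
      ((hmem a' a h' hr').trans (hmem a'' a h'' hr'').symm)
  · intro a a' a'' h' hr' h'' hr''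
    exact eq_of_eq_neg hT (htgt a' a'' (h'.trans h''.symm))
      ((hmem a a' h'.symm hr').symm.trans (hmem a a'' h''.symm hr''))

section Construction

open Function

variable [Nonempty Q.A]

def stringT (Q : Quiv) [Nonempty Q.A] (a : Q.A) : ℤ :=
  signOf (a = invFun Q.tgt (Q.tgt a))

def stringS (Q : Quiv) [Nonempty Q.A] (R : Set (List Q.A)) (a : Q.A) : ℤ :=
  if ∃ b, Q.tgt b = Q.src a then signOf ([a, invFun Q.tgt (Q.src a)] ∈ R)
  else signOf (a = invFun Q.src (Q.src a))

theorem stringS_eq_one_or (a : Q.A) : Q.stringS R a = 1 ∨ Q.stringS R a = -1 := by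
  unfold stringS
  split_ifs <;> exact signOf_eq_one_or _

theorem AlmostGentle.stringS_eq_neg_of_src_eq (h : Q.AlmostGentle R) {a b : Q.A}
    (hab : Q.src a = Q.src b) (hne : a ≠ b) : Q.stringS R a = -Q.stringS R b := by
  unfold stringS
  rw [hab]
  split_ifs with hin
  · set β := invFun Q.tgt (Q.src b)
    have hβ : Q.tgt β = Q.src b := invFun_eq hin
    have h₁ : [a, β] ∈ R → [b, β] ∈ R → a = b :=
      (h.succ_unique_of_mem β a b (hab.trans hβ.symm) · hβ.symm)
    have h₂ : [a, β] ∉ R → [b, β] ∉ R → a = b :=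
      (h.succ_unique_of_not_mem β a b (hab.trans hβ.symm) · hβ.symm)
    exact signOf_eq_neg_of_iff_not (by tauto)
  · set c := invFun Q.src (Q.src b)
    have := h.src_three _ a b c hab rfl (invFun_eq ⟨b, rfl⟩)
    exact signOf_eq_neg_of_iff_not (by grind)

theorem AlmostGentle.stringT_eq_neg_of_tgt_eq (h : Q.AlmostGentle R) {a b : Q.A}
    (hab : Q.tgt a = Q.tgt b) (hne : a ≠ b) : Q.stringT a = -Q.stringT b := by
  unfold stringT
  rw [hab]
  set c := invFun Q.tgt (Q.tgt b)
  have := h.tgt_three _ a b c hab rfl (invFun_eq ⟨b, rfl⟩)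
  exact signOf_eq_neg_of_iff_not (by grind)

theorem AlmostGentle.stringS_eq_neg_stringT (h : Q.AlmostGentle R) {a b : Q.A}
    (hab : Q.src a = Q.tgt b) (hr : [a, b] ∉ R) : Q.stringS R a = -Q.stringT b := by
  unfold stringS stringT
  rw [if_pos ⟨b, hab.symm⟩, ← hab]
  set β := invFun Q.tgt (Q.src a)
  have hβ : Q.tgt β = Q.src a := invFun_eq ⟨b, hab.symm⟩
  have := h.pred_unique_of_not_mem a b β hab.symm hr hβ
  exact signOf_eq_neg_of_iff_not (by grind)

theorem AlmostGentle.stringS_eq_stringT (h : Q.AlmostGentle R) {a b : Q.A}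
    (hab : Q.src a = Q.tgt b) (hr : [a, b] ∈ R) : Q.stringS R a = Q.stringT b := by
  unfold stringS stringT
  rw [if_pos ⟨b, hab.symm⟩, ← hab]
  set β := invFun Q.tgt (Q.src a)
  have hβ : Q.tgt β = Q.src a := invFun_eq ⟨b, hab.symm⟩
  have := h.pred_unique_of_mem a b β hab.symm hr hβ
  exact congrArg signOf (propext ⟨this, fun hbβ => hbβ ▸ hr⟩)

theorem AlmostGentle.stringFuns (h : Q.AlmostGentle R) :
    Q.StringFuns R (Q.stringS R) Q.stringT :=
  ⟨stringS_eq_one_or, fun _ => signOf_eq_one_or _,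
    fun _ _ => h.stringS_eq_neg_of_src_eq, fun _ _ => h.stringT_eq_neg_of_tgt_eq,
    fun _ _ => h.stringS_eq_neg_stringT, fun _ _ => h.stringS_eq_stringT⟩

end Construction

theorem exists_stringFuns_iff_almostGentle :
    (∃ S T : Q.A → ℤ, Q.StringFuns R S T) ↔ Q.AlmostGentle R := by
  refine ⟨fun ⟨_, _, h⟩ => h.almostGentle, fun h => ?_⟩
  cases isEmpty_or_nonempty Q.A
  · exact ⟨0, 0, by simp [StringFuns]⟩
  · exact ⟨_, _, h.stringFuns⟩

end Quiv

theorem stmt_5_general (Q : Quiv) (R : Set (List Q.A)) :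
    (∃ S T : Q.A → ℤ, Q.StringFuns R S T) ↔
      ((∀ (x : Q.V) (a b c : Q.A),
          Q.src a = x → Q.src b = x → Q.src c = x → a = b ∨ a = c ∨ b = c) ∧
       (∀ (x : Q.V) (a b c : Q.A),
          Q.tgt a = x → Q.tgt b = x → Q.tgt c = x → a = b ∨ a = c ∨ b = c) ∧
       (∀ a a' a'' : Q.A, Q.src a' = Q.tgt a → [a', a] ∉ R →
          Q.src a'' = Q.tgt a → [a'', a] ∉ R → a' = a'') ∧
       (∀ a a' a'' : Q.A, Q.tgt a' = Q.src a → [a, a'] ∉ R →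
          Q.tgt a'' = Q.src a → [a, a''] ∉ R → a' = a'') ∧
       (∀ a a' a'' : Q.A, Q.src a' = Q.tgt a → [a', a] ∈ R →
          Q.src a'' = Q.tgt a → [a'', a] ∈ R → a' = a'') ∧
       (∀ a a' a'' : Q.A, Q.tgt a' = Q.src a → [a, a'] ∈ R →
          Q.tgt a'' = Q.src a → [a, a''] ∈ R → a' = a'')) := by
  rw [Quiv.exists_stringFuns_iff_almostGentle]
  exact ⟨fun ⟨h₁, h₂, h₃, h₄, h₅, h₆⟩ => ⟨h₁, h₂, h₃, h₄, h₅, h₆⟩,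
    fun ⟨h₁, h₂, h₃, h₄, h₅, h₆⟩ => ⟨h₁, h₂, h₃, h₄, h₅, h₆⟩⟩

/-- An admissible monomial bound quiver admits string functions if and only if it is
almost gentle: (a) each vertex has at most two outgoing and at most two incoming
arrows; (b) for each arrow `α` there is at most one arrow `α'` with `s α' = t α` and
`α'α ∉ R`, and at most one `α'` with `t α' = s α` and `αα' ∉ R`; (c) the same with
`∈ R` in place of `∉ R`. -/
theorem stmt_5 (Q : Quiv) (R : Set (List Q.A))
    (hmono : ∀ ρ ∈ R, Q.ChainP ρ ∧ 2 ≤ ρ.length) (hadm : Q.Admissible R) :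
    (∃ S T : Q.A → ℤ, Q.StringFuns R S T) ↔
      ((∀ (x : Q.V) (a b c : Q.A),
          Q.src a = x → Q.src b = x → Q.src c = x → a = b ∨ a = c ∨ b = c) ∧
       (∀ (x : Q.V) (a b c : Q.A),
          Q.tgt a = x → Q.tgt b = x → Q.tgt c = x → a = b ∨ a = c ∨ b = c) ∧
       (∀ a a' a'' : Q.A, Q.src a' = Q.tgt a → [a', a] ∉ R →
          Q.src a'' = Q.tgt a → [a'', a] ∉ R → a' = a'') ∧
       (∀ a a' a'' : Q.A, Q.tgt a' = Q.src a → [a, a'] ∉ R →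
          Q.tgt a'' = Q.src a → [a, a''] ∉ R → a' = a'') ∧
       (∀ a a' a'' : Q.A, Q.src a' = Q.tgt a → [a', a] ∈ R →
          Q.src a'' = Q.tgt a → [a'', a] ∈ R → a' = a'') ∧
       (∀ a a' a'' : Q.A, Q.tgt a' = Q.src a → [a, a'] ∈ R →
          Q.tgt a'' = Q.src a → [a, a''] ∈ R → a' = a'')) :=
  stmt_5_general Q R
end
end

section
/- Let (Γ, R) be a gentle bound quiver, x a vertex, and ε ∈ {±1}. If there is no arrow α with s α = x and S α = ε (i.e. α_{x,ε} = ∅), then the set Θ_{x,ε} of antipaths θ with t θ = x and T θ = ε contains an antipath of maximal length; in fact every antipath in Θ_{x,ε} has length at most |Γ₁|. -/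
noncomputable section
open Classical

namespace Quiv

variable (Q : Quiv)

/-- `l` is an antipath: all letters are arrows and each consecutive pair of
arrows is a relation. -/
def IsAntipath (R : Set (List Q.A)) (l : List Q.A) : Prop :=
  l.Chain' fun a b => Q.src a = Q.tgt b ∧ [a, b] ∈ R

/-- `l` belongs to `Θ_{x,ε}`: it is an antipath with `t l = x` and `T l = ε`
(the trivial antipath, represented by `[]`, always qualifies). -/
def InTheta (R : Set (List Q.A)) (T : Q.A → ℤ) (x : Q.V) (ε : ℤ) (l : List Q.A) : Prop :=
  Q.IsAntipath R l ∧ ∀ a ∈ l.head?, Q.tgt a = x ∧ T a = ε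

end Quiv

/-!
Gentleness makes relation-predecessors unique: if `[a, c]` and `[b, c]` are relations then
`S a = T c = S b`, so `a` and `b` are arrows with the same source and the same sign, hence equal.
Reading an antipath `θ` of `Θ_{x,ε}` backwards from a repeated arrow, uniqueness of
predecessors propagates the repetition down to the first arrow `θ₁`, which would then have a
predecessor `α` with `s α = t θ₁ = x` and `S α = T θ₁ = ε`. So `θ` has no repeated arrow and
`ℓ(θ) ≤ |Γ₁|`; bounded lengths of a nonempty family of antipaths give one of maximal length.
-/

theorem List.IsChain.nodup_of_left_unique {α : Type*} {r : α → α → Prop}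
    (hr : ∀ a b c, r a c → r b c → a = b) {l : List α} (hl : l.IsChain r)
    (hhead : ∀ a ∈ l.head?, ∀ b, ¬ r b a) : l.Nodup := by
  induction l using List.reverseRecOn with
  | nil => exact List.nodup_nil
  | append_singleton l z ih =>
    have hnd : l.Nodup := ih (List.isChain_append.mp hl).1 fun a ha =>
      hhead a (by simp [List.head?_append, Option.mem_def.mp ha])
    refine List.nodup_append'.mpr ⟨hnd, List.nodup_singleton z, ?_⟩
    rw [List.disjoint_singleton]
    intro hz
    -- a second occurrence of `z` in `l` would give `z` a second predecessor
    obtain ⟨u, v, rfl⟩ := List.mem_iff_append.mp hz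
    have hyz := hl.rel_getLast_head_of_append (by simp) (List.cons_ne_nil z [])
    rw [List.getLast_append_of_ne_nil _ (List.cons_ne_nil z v)] at hyz
    rcases List.eq_nil_or_concat' u with rfl | ⟨u, w, rfl⟩
    · exact hhead z (by simp) _ hyz
    · have hwz := (List.isChain_append.mp hl).1.rel_getLast_head_of_append
        (l₁ := u ++ [w]) (List.concat_ne_nil w u) (List.cons_ne_nil z v)
      rw [List.getLast_concat] at hwz
      exact List.disjoint_of_nodup_append hnd (by simp)
        (hr _ _ _ hwz hyz ▸ List.getLast_mem (List.cons_ne_nil z v))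

namespace Quiv

variable {Q : Quiv} {R : Set (List Q.A)} {S T : Q.A → ℤ}

theorem IsGentle.src_eq_tgt_of_mem (hg : Q.IsGentle R S T) {a c : Q.A} (h : [a, c] ∈ R) :
    Q.src a = Q.tgt c := by
  simpa [ChainP, List.Chain'] using (hg.2.2.1 _ h).1

theorem IsGentle.S_eq_T_of_mem (hg : Q.IsGentle R S T) {a c : Q.A} (h : [a, c] ∈ R) :
    S a = T c := by
  have hsrc := hg.src_eq_tgt_of_mem h
  obtain ⟨-, -, -, -, -, -, -, -, hSR⟩ := hg
  exact hSR a c hsrc h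

theorem IsGentle.eq_of_mem_of_mem (hg : Q.IsGentle R S T) {a b c : Q.A}
    (ha : [a, c] ∈ R) (hb : [b, c] ∈ R) : a = b := by
  have hsrc := (hg.src_eq_tgt_of_mem ha).trans (hg.src_eq_tgt_of_mem hb).symm
  have hSa := hg.S_eq_T_of_mem ha
  have hSb := hg.S_eq_T_of_mem hb
  obtain ⟨-, -, -, hS, -, hSsrc, -⟩ := hg
  by_contra hne
  have hab := hSsrc a b hsrc hne
  rcases hS a with h | h <;> linarith

theorem InTheta.nodup (hg : Q.IsGentle R S T) {x : Q.V} {ε : ℤ}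
    (hno : ¬ ∃ a : Q.A, Q.src a = x ∧ S a = ε) {l : List Q.A} (hl : Q.InTheta R T x ε l) :
    l.Nodup := by
  refine List.IsChain.nodup_of_left_unique (r := fun a b => [a, b] ∈ R)
    (fun _ _ _ => hg.eq_of_mem_of_mem) (hl.1.imp fun _ _ h => h.2) ?_
  intro a ha b hba
  obtain ⟨htgt, hT⟩ := hl.2 a ha
  exact hno ⟨b, (hg.src_eq_tgt_of_mem hba).trans htgt, (hg.S_eq_T_of_mem hba).trans hT⟩

end Quiv

theorem stmt_6_general (Q : Quiv) [Fintype Q.A] (R : Set (List Q.A)) (S T : Q.A → ℤ)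
    (hgentle : Q.IsGentle R S T)
    (x : Q.V) (ε : ℤ)
    (hno : ¬ ∃ a : Q.A, Q.src a = x ∧ S a = ε) :
    (∀ l : List Q.A, Q.InTheta R T x ε l → l.length ≤ Fintype.card Q.A) ∧
    (∃ l₀ : List Q.A, Q.InTheta R T x ε l₀ ∧
      ∀ l : List Q.A, Q.InTheta R T x ε l → l.length ≤ l₀.length) := by
  have bound : ∀ l, Q.InTheta R T x ε l → l.length ≤ Fintype.card Q.A :=
    fun l hl => (hl.nodup hgentle hno).length_le_card
  have hnil : Q.InTheta R T x ε [] := ⟨List.isChain_nil, by simp⟩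
  obtain ⟨n, ⟨l₀, hl₀, rfl⟩, hmax⟩ :=
    BddAbove.exists_isGreatest_of_nonempty (S := List.length '' {l | Q.InTheta R T x ε l})
      ⟨_, Set.forall_mem_image.mpr bound⟩ ⟨_, Set.mem_image_of_mem _ hnil⟩
  exact ⟨bound, l₀, hl₀, fun l hl => hmax (Set.mem_image_of_mem _ hl)⟩

/-- In a gentle bound quiver, if there is no arrow `α` with `s α = x` and `S α = ε`,
then every antipath in `Θ_{x,ε}` has length at most `|Γ₁|`, and `Θ_{x,ε}` contains
an antipath of maximal length. -/
theorem stmt_6 (Q : Quiv) [Fintype Q.A] (R : Set (List Q.A)) (S T : Q.A → ℤ)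
    (hgentle : Q.IsGentle R S T) (hadm : Q.Admissible R)
    (x : Q.V) (ε : ℤ) (hε : ε = 1 ∨ ε = -1)
    (hno : ¬ ∃ a : Q.A, Q.src a = x ∧ S a = ε) :
    (∀ l : List Q.A, Q.InTheta R T x ε l → l.length ≤ Fintype.card Q.A) ∧
    (∃ l₀ : List Q.A, Q.InTheta R T x ε l₀ ∧
      ∀ l : List Q.A, Q.InTheta R T x ε l → l.length ≤ l₀.length) :=
  stmt_6_general Q R S T hgentle x ε hno
end
end

section
/- Let ζ', ζ'' be strings in an almost gentle bound quiver with t ζ' = t ζ'' and T ζ' = T ζ''. Then the relation ≤_t (defined via the length l of the maximal common initial segment and the conditions: ζ' <_t ζ'' iff either ℓ(ζ'') > l and α_{l+1}(ζ'') ∈ Γ₁, or ℓ(ζ') > l and α_{l+1}⁻¹(ζ') ∈ Γ₁) is a total order on the set of strings with fixed target t and fixed value of T. -/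
noncomputable section
open Classical

namespace Quiv

variable (Q : Quiv)

/-- The length of the maximal common initial segment of two letter lists. -/
def cpl [DecidableEq Q.A] : List Q.Letter → List Q.Letter → ℕ
  | a :: s, b :: t => if a = b then cpl s t + 1 else 0
  | _, _ => 0

/-- The strict order `ζ' <_t ζ''` on strings with common target and `T`-value. -/
def ltT [DecidableEq Q.A] (z' z'' : List Q.Letter) : Prop :=
  (∃ a : Q.A, z''[Q.cpl z' z'']? = some (Sum.inl a)) ∨
  (∃ a : Q.A, z'[Q.cpl z' z'']? = some (Sum.inr a))

/-- The order `ζ' ≤_t ζ''`. -/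
def leT [DecidableEq Q.A] (z' z'' : List Q.Letter) : Prop :=
  z' = z'' ∨ Q.ltT z' z''

/-- Membership in the set of strings with target `x` and `T`-value `ε`
(the empty list represents the trivial string `1_{x,-ε}`). -/
def InTset (R : Set (List Q.A)) (S T : Q.A → ℤ) (x : Q.V) (ε : ℤ)
    (z : List Q.Letter) : Prop :=
  Q.IsStringList R z ∧ ∀ a ∈ z.head?, Q.tgtL a = x ∧ Q.TL S T a = ε

end Quiv

/-!
Along a string with target `x` and `T`-value `ε`, the target and `T`-value of each letter are
fixed by the letters before it: by `x` and `ε` for the first letter, and by `T α = -S β` for a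
letter `α` following `β` (a sign condition, in each of the four direction cases). The string
functions leave at most one direct and one inverse letter with given target and `T`-value, so two
distinct such strings first differ where one has a direct and the other an inverse letter, or
where one of them has ended. Ranking inverse letter < end of string < direct letter, `≤_t` is
therefore the lexicographic order of the rank sequences `n ↦ rank ζ[n]`, a linear order on
`ℕ → ℕ`.
-/

lemma Pi.toLex_lt_toLex_iff_of_eqOn_Iio {ι : Type*} {β : ι → Type*} [LinearOrder ι]
    [∀ i, Preorder (β i)] {x y : ∀ i, β i} {i : ι} (hpre : ∀ j < i, x j = y j)
    (hne : x i ≠ y i) : toLex x < toLex y ↔ x i < y i := by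
  refine ⟨fun ⟨k, hk, hlt⟩ => ?_, fun h => ⟨i, hpre, h⟩⟩
  rcases lt_trichotomy k i with hki | rfl | hik
  · exact absurd (hpre k hki) hlt.ne
  · exact hlt
  · exact absurd (hk i hik) hne

namespace Quiv

variable {Q : Quiv} {R : Set (List Q.A)} {S T : Q.A → ℤ}

lemma StringFuns.letter_eq (hST : Q.StringFuns R S T) {u v : Q.Letter}
    (hdir : u.isLeft = v.isLeft) (htgt : Q.tgtL u = Q.tgtL v)
    (hTL : Q.TL S T u = Q.TL S T v) : u = v := by
  obtain ⟨hS, hT, hSsrc, hTtgt, -, -⟩ := hST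
  rcases u with a | a <;> rcases v with b | b <;> simp only [Sum.isLeft_inl,
    Sum.isLeft_inr, Bool.false_eq_true, Bool.true_eq_false] at hdir <;>
    simp only [tgtL, TL, Sum.elim_inl, Sum.elim_inr] at htgt hTL <;> by_contra hne
  · have := hTtgt a b htgt (by simpa using hne)
    rcases hT a with h | h <;> omega
  · have := hSsrc a b htgt (by simpa using hne)
    rcases hS a with h | h <;> omega

lemma StringFuns.TL_eq_neg_SL (hST : Q.StringFuns R S T) {c u : Q.Letter}
    (hcu : Q.srcL c = Q.tgtL u) (hgood : ¬ Q.BadPair R c u) :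
    Q.TL S T u = - Q.SL S T c := by
  obtain ⟨-, -, hSsrc, hTtgt, hSTnr, -⟩ := hST
  rcases c with c | c <;> rcases u with a | a <;>
    simp only [srcL, tgtL, TL, SL, BadPair, Sum.elim_inl, Sum.elim_inr] at hcu hgood ⊢
  · rw [hSTnr c a hcu hgood, neg_neg]
  · rw [hSsrc a c hcu.symm (Ne.symm hgood)]
  · rw [hTtgt a c hcu.symm (Ne.symm hgood)]
  · rw [hSTnr a c hcu.symm hgood]

lemma IsStringList.step {z : List Q.Letter} (hz : Q.IsStringList R z) {l : ℕ} {c u : Q.Letter}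
    (hc : z[l]? = some c) (hu : z[l + 1]? = some u) :
    Q.srcL c = Q.tgtL u ∧ ¬ Q.BadPair R c u := by
  obtain ⟨hl, rfl⟩ := List.getElem?_eq_some_iff.mp hu
  obtain ⟨-, rfl⟩ := List.getElem?_eq_some_iff.mp hc
  exact List.IsChain.getElem hz l hl

lemma InTset.getElem?_eq_of_isLeft_eq (hST : Q.StringFuns R S T) {x : Q.V} {ε : ℤ}
    {z' z'' : List Q.Letter} (h' : Q.InTset R S T x ε z') (h'' : Q.InTset R S T x ε z'')
    {l : ℕ} (hpre : ∀ j < l, z'[j]? = z''[j]?) {u v : Q.Letter}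
    (hu : z'[l]? = some u) (hv : z''[l]? = some v) (hdir : u.isLeft = v.isLeft) : u = v := by
  suffices Q.tgtL u = Q.tgtL v ∧ Q.TL S T u = Q.TL S T v from hST.letter_eq hdir this.1 this.2
  cases l with
  | zero =>
    rw [← List.head?_eq_getElem?] at hu hv
    obtain ⟨hux, huε⟩ := h'.2 u hu
    obtain ⟨hvx, hvε⟩ := h''.2 v hv
    exact ⟨hux.trans hvx.symm, huε.trans hvε.symm⟩
  | succ l =>
    have hl : l < z'.length := Nat.lt_of_succ_lt (List.getElem?_eq_some_iff.mp hu).1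
    have hc' : z'[l]? = some z'[l] := List.getElem?_eq_getElem hl
    have hc'' : z''[l]? = some z'[l] := hpre l l.lt_succ_self ▸ hc'
    obtain ⟨hcu, hgu⟩ := h'.1.step hc' hu
    obtain ⟨hcv, hgv⟩ := h''.1.step hc'' hv
    exact ⟨hcu.symm.trans hcv, (hST.TL_eq_neg_SL hcu hgu).trans (hST.TL_eq_neg_SL hcv hgv).symm⟩

def letterRank : Option Q.Letter → ℕ
  | some (.inr _) => 0
  | none => 1
  | some (.inl _) => 2

def rankSeq (z : List Q.Letter) : Lex (ℕ → ℕ) := toLex fun n => letterRank z[n]?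

lemma letterRank_lt_iff {u v : Option Q.Letter} (h : letterRank u ≠ letterRank v) :
    letterRank u < letterRank v ↔ (∃ a, v = some (.inl a)) ∨ (∃ a, u = some (.inr a)) := by
  rcases u with _ | a | a <;> rcases v with _ | b | b <;> simp [letterRank] at h ⊢

variable [DecidableEq Q.A]

lemma getElem?_eq_of_lt_cpl {s t : List Q.Letter} {j : ℕ} (hj : j < Q.cpl s t) :
    s[j]? = t[j]? := by
  induction s generalizing t j with
  | nil => simp [cpl] at hj
  | cons a s ih =>
    cases t with
    | nil => simp [cpl] at hj
    | cons b t =>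
      by_cases hab : a = b
      · simp only [cpl, hab, if_true] at hj
        cases j with
        | zero => simp [hab]
        | succ j => simpa using ih (by omega)
      · simp [cpl, hab] at hj

lemma getElem?_cpl_ne {s t : List Q.Letter} (hst : s ≠ t) :
    s[Q.cpl s t]? ≠ t[Q.cpl s t]? := by
  induction s generalizing t with
  | nil => cases t <;> simp_all [cpl]
  | cons a s ih =>
    cases t with
    | nil => simp [cpl]
    | cons b t =>
      by_cases hab : a = b
      · subst hab
        simpa [cpl] using ih (by simpa using hst)
      · simp [cpl, hab]

lemma InTset.letterRank_cpl_ne (hST : Q.StringFuns R S T) {x : Q.V} {ε : ℤ}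
    {z' z'' : List Q.Letter} (h' : Q.InTset R S T x ε z') (h'' : Q.InTset R S T x ε z'')
    (hne : z' ≠ z'') : letterRank z'[Q.cpl z' z'']? ≠ letterRank z''[Q.cpl z' z'']? := by
  intro hrank
  apply getElem?_cpl_ne hne
  have hdet {u v : Q.Letter} := h'.getElem?_eq_of_isLeft_eq hST h''
    (fun j hj => getElem?_eq_of_lt_cpl hj) (u := u) (v := v)
  rcases hu : z'[Q.cpl z' z'']? with _ | a | a <;> rcases hv : z''[Q.cpl z' z'']? with _ | b | b <;>
    simp only [hu, hv, letterRank] at hrank <;> first | rfl | omega | rw [hdet hu hv rfl]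

lemma InTset.rankSeq_ne (hST : Q.StringFuns R S T) {x : Q.V} {ε : ℤ}
    {z' z'' : List Q.Letter} (h' : Q.InTset R S T x ε z') (h'' : Q.InTset R S T x ε z'')
    (hne : z' ≠ z'') : rankSeq z' ≠ rankSeq z'' :=
  fun h => h'.letterRank_cpl_ne hST h'' hne (congrFun (congrArg ofLex h) _)

lemma InTset.leT_iff_rankSeq_le (hST : Q.StringFuns R S T) {x : Q.V} {ε : ℤ}
    {z' z'' : List Q.Letter} (h' : Q.InTset R S T x ε z') (h'' : Q.InTset R S T x ε z'') :
    Q.leT z' z'' ↔ rankSeq z' ≤ rankSeq z'' := by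
  by_cases heq : z' = z''
  · simp [leT, heq]
  have hsep := h'.letterRank_cpl_ne hST h'' heq
  have hpre : ∀ j < Q.cpl z' z'', letterRank z'[j]? = letterRank z''[j]? :=
    fun j hj => by rw [getElem?_eq_of_lt_cpl hj]
  rw [leT, ltT, (h'.rankSeq_ne hST h'' heq).le_iff_lt, ← letterRank_lt_iff hsep]
  exact (or_iff_right heq).trans (Pi.toLex_lt_toLex_iff_of_eqOn_Iio hpre hsep).symm

end Quiv

theorem stmt_17_general (Q : Quiv) [DecidableEq Q.A] (R : Set (List Q.A)) (S T : Q.A → ℤ)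
    (hST : Q.StringFuns R S T) (x : Q.V) (ε : ℤ) :
    (∀ z, Q.InTset R S T x ε z → Q.leT z z) ∧
    (∀ z' z'', Q.InTset R S T x ε z' → Q.InTset R S T x ε z'' →
      Q.leT z' z'' → Q.leT z'' z' → z' = z'') ∧
    (∀ z' z'' z''', Q.InTset R S T x ε z' → Q.InTset R S T x ε z'' →
      Q.InTset R S T x ε z''' → Q.leT z' z'' → Q.leT z'' z''' → Q.leT z' z''') ∧
    (∀ z' z'', Q.InTset R S T x ε z' → Q.InTset R S T x ε z'' →
      Q.leT z' z'' ∨ Q.leT z'' z') := by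
  refine ⟨fun z _ => Or.inl rfl, ?_, ?_, ?_⟩
  · intro z' z'' h' h'' h₁ h₂
    by_contra hne
    exact h'.rankSeq_ne hST h'' hne <| le_antisymm
      ((h'.leT_iff_rankSeq_le hST h'').mp h₁) ((h''.leT_iff_rankSeq_le hST h').mp h₂)
  · intro z' z'' z''' h' h'' h''' h₁ h₂
    exact (h'.leT_iff_rankSeq_le hST h''').mpr <|
      ((h'.leT_iff_rankSeq_le hST h'').mp h₁).trans ((h''.leT_iff_rankSeq_le hST h''').mp h₂)
  · intro z' z'' h' h''
    rw [h'.leT_iff_rankSeq_le hST h'', h''.leT_iff_rankSeq_le hST h']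
    exact le_total _ _

/-- In an almost gentle bound quiver, the relation `≤_t` is a total order on the
set of strings with fixed target `x` and fixed value `ε` of `T`. -/
theorem stmt_17 (Q : Quiv) [DecidableEq Q.A] (R : Set (List Q.A)) (S T : Q.A → ℤ)
    (hmono : ∀ ρ ∈ R, Q.ChainP ρ ∧ 2 ≤ ρ.length) (hadm : Q.Admissible R)
    (hST : Q.StringFuns R S T) (x : Q.V) (ε : ℤ) (hε : ε = 1 ∨ ε = -1) :
    (∀ z, Q.InTset R S T x ε z → Q.leT z z) ∧
    (∀ z' z'', Q.InTset R S T x ε z' → Q.InTset R S T x ε z'' →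
      Q.leT z' z'' → Q.leT z'' z' → z' = z'') ∧
    (∀ z' z'' z''', Q.InTset R S T x ε z' → Q.InTset R S T x ε z'' →
      Q.InTset R S T x ε z''' → Q.leT z' z'' → Q.leT z'' z''' → Q.leT z' z''') ∧
    (∀ z' z'', Q.InTset R S T x ε z' → Q.InTset R S T x ε z'' →
      Q.leT z' z'' ∨ Q.leT z'' z') :=
  stmt_17_general Q R S T hST x ε
end
end
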